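/- arXiv:2507.15056 — 3 statements merged into one kernel-verified Lean document; each statement's English description precedes it below -/
import Mathlib

section
/- Let H_X be a matrix over ZMod 2 with rows indexed by ρ and columns by ι, and H_Z a matrix over ZMod 2 with rows indexed by ρ′ and columns by ι. If H_X · H_Zᵀ = 0 (equivalently, every row of H_X is ZMod 2-orthogonal to every row of H_Z), then for every r ∈ ρ and r′ ∈ ρ′ the X-stabilizer string X(H_X r) and the Z-stabilizer string Z(H_Z r′) commute as matrices over ℂ, where H_X r and H_Z r′ denote the corresponding rows. -/
open Matrix

variable {ι : Type*} [Fintype ι] [DecidableEq ι]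

/-- The mod-2 inner product `⟨a,v⟩ = ∑ᵢ a i * v i`. -/
def inner2 (a v : ι → ZMod 2) : ZMod 2 := ∑ i, a i * v i

/-- The Pauli-Z string `Z(a)`: the diagonal matrix whose entry at the
computational basis state `v` is `(−1)^⟨a,v⟩`. -/
def PauliZ (a : ι → ZMod 2) : Matrix (ι → ZMod 2) (ι → ZMod 2) ℂ :=
  Matrix.diagonal fun v => (-1 : ℂ) ^ (inner2 a v).val

/-- The Pauli-X string `X(b)`: the permutation (0–1) matrix with entry
`1` at `(v, w)` iff `v = w + b`. -/
def PauliX (b : ι → ZMod 2) : Matrix (ι → ZMod 2) (ι → ZMod 2) ℂ :=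
  Matrix.of fun v w => if v = w + b then 1 else 0

variable {ρ ρ' : Type*} [Fintype ρ] [DecidableEq ρ] [Fintype ρ'] [DecidableEq ρ']

lemma inner2_add_right (a v w : ι → ZMod 2) :
    inner2 a (v + w) = inner2 a v + inner2 a w := by
  simp [inner2, mul_add, Finset.sum_add_distrib]

/-- In a CSS code (`H_X · H_Zᵀ = 0`), every X-stabilizer string commutes with
every Z-stabilizer string. -/
theorem css_stabilizers_commute (HX : Matrix ρ ι (ZMod 2)) (HZ : Matrix ρ' ι (ZMod 2))
    (h : HX * HZ.transpose = 0) (r : ρ) (r' : ρ') :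
    PauliX (HX r) * PauliZ (HZ r') = PauliZ (HZ r') * PauliX (HX r) := by
  have horth : inner2 (HZ r') (HX r) = 0 := by
    have := congrFun (congrFun h r) r'
    simpa [Matrix.mul_apply, inner2, mul_comm] using this
  ext v w
  rw [PauliZ, Matrix.mul_diagonal, Matrix.diagonal_mul]
  simp only [PauliX, Matrix.of_apply]
  rcases eq_or_ne v (w + HX r) with hv | hv
  · subst hv
    simp [inner2_add_right, horth]
  · simp [hv]
end

section
/- Let ι and κ be finite types, let C₁ be a ZMod 2-submodule of (ι → ZMod 2) and C₂ a ZMod 2-submodule of (κ → ZMod 2), and let d₁, d₂ be natural numbers such that every nonzero element of C₁ has Hamming weight at least d₁ and every nonzero element of C₂ has Hamming weight at least d₂. Let C be the ZMod 2-submodule of (ι × κ → ZMod 2) spanned by all pure tensors (i,k) ↦ f(i)·g(k) with f ∈ C₁ and g ∈ C₂. Then every nonzero element of C has Hamming weight at least d₁·d₂. -/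
/-- The Hamming weight of a `ZMod 2`-valued function on a finite type:
the number of coordinates where it is nonzero. -/
def hammingWt {ι : Type*} [Fintype ι] (f : ι → ZMod 2) : ℕ :=
  (Finset.univ.filter fun i => f i ≠ 0).card

lemma tensor_row_mem {ι κ : Type*} [Fintype ι] [Fintype κ]
    (C₁ : Submodule (ZMod 2) (ι → ZMod 2)) (C₂ : Submodule (ZMod 2) (κ → ZMod 2))
    (c : ι × κ → ZMod 2)
    (hc : c ∈ Submodule.span (ZMod 2)
      {h : ι × κ → ZMod 2 | ∃ f ∈ C₁, ∃ g ∈ C₂, h = fun p => f p.1 * g p.2})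
    (i : ι) : (fun k => c (i, k)) ∈ C₂ := by
  induction hc using Submodule.span_induction with
  | mem x hx =>
    obtain ⟨f, hf, g, hg, rfl⟩ := hx
    exact C₂.smul_mem (f i) hg
  | zero => exact C₂.zero_mem
  | add x y _ _ hx hy => exact C₂.add_mem hx hy
  | smul a x _ hx => exact C₂.smul_mem a hx

lemma tensor_col_mem {ι κ : Type*} [Fintype ι] [Fintype κ]
    (C₁ : Submodule (ZMod 2) (ι → ZMod 2)) (C₂ : Submodule (ZMod 2) (κ → ZMod 2))
    (c : ι × κ → ZMod 2)
    (hc : c ∈ Submodule.span (ZMod 2)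
      {h : ι × κ → ZMod 2 | ∃ f ∈ C₁, ∃ g ∈ C₂, h = fun p => f p.1 * g p.2})
    (k : κ) : (fun i => c (i, k)) ∈ C₁ := by
  induction hc using Submodule.span_induction with
  | mem x hx =>
    obtain ⟨f, hf, g, hg, rfl⟩ := hx
    have : (fun i => f i * g k) = g k • f := by
      funext i; simp [mul_comm]
    exact this ▸ C₁.smul_mem (g k) hf
  | zero => exact C₁.zero_mem
  | add x y _ _ hx hy => exact C₁.add_mem hx hy
  | smul a x _ hx => exact C₁.smul_mem a hx

/-- Minimum distance of a tensor product code: if every nonzero codeword of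
`C₁` has weight at least `d₁` and every nonzero codeword of `C₂` has weight at
least `d₂`, then every nonzero element of the span of pure tensors
`(i,k) ↦ f i * g k` (`f ∈ C₁`, `g ∈ C₂`) has weight at least `d₁ * d₂`. -/
theorem tensor_code_distance {ι κ : Type*} [Fintype ι] [Fintype κ]
    (C₁ : Submodule (ZMod 2) (ι → ZMod 2)) (C₂ : Submodule (ZMod 2) (κ → ZMod 2))
    (d₁ d₂ : ℕ)
    (h₁ : ∀ f ∈ C₁, f ≠ 0 → d₁ ≤ hammingWt f)
    (h₂ : ∀ g ∈ C₂, g ≠ 0 → d₂ ≤ hammingWt g)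
    (c : ι × κ → ZMod 2)
    (hc : c ∈ Submodule.span (ZMod 2)
      {h : ι × κ → ZMod 2 | ∃ f ∈ C₁, ∃ g ∈ C₂, h = fun p => f p.1 * g p.2})
    (hc0 : c ≠ 0) :
    d₁ * d₂ ≤ hammingWt c := by
  classical
  -- find a nonzero entry
  obtain ⟨⟨i₀, k₀⟩, hp⟩ : ∃ p, c p ≠ 0 := by
    by_contra h
    push_neg at h
    exact hc0 (funext h)
  -- the row through i₀
  set r : κ → ZMod 2 := fun k => c (i₀, k) with hr
  have hrC : r ∈ C₂ := tensor_row_mem C₁ C₂ c hc i₀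
  have hr0 : r ≠ 0 := fun h => hp (congrFun h k₀)
  have hrw : d₂ ≤ hammingWt r := h₂ r hrC hr0
  -- support sets
  set T : Finset κ := Finset.univ.filter fun k => r k ≠ 0 with hT
  have hTcard : d₂ ≤ T.card := hrw
  set A : κ → Finset ι := fun k => Finset.univ.filter fun i => c (i, k) ≠ 0 with hA
  have hAcard : ∀ k ∈ T, d₁ ≤ (A k).card := by
    intro k hk
    have hk' : c (i₀, k) ≠ 0 := by simpa [hT, hr] using hk
    have hcol : (fun i => c (i, k)) ∈ C₁ := tensor_col_mem C₁ C₂ c hc k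
    have hcol0 : (fun i => c (i, k)) ≠ 0 := fun h => hk' (congrFun h i₀)
    exact h₁ _ hcol hcol0
  -- the biUnion is inside the support of c
  have hsub : T.biUnion (fun k => (A k).image fun i => (i, k)) ⊆
      Finset.univ.filter fun p => c p ≠ 0 := by
    intro p hp'
    simp only [Finset.mem_biUnion, Finset.mem_image, hA, Finset.mem_filter,
      Finset.mem_univ, true_and] at hp' ⊢
    obtain ⟨k, _, i, hi, rfl⟩ := hp'
    exact hi
  have hdisj : ∀ k₁ ∈ T, ∀ k₂ ∈ T, k₁ ≠ k₂ →
      Disjoint ((A k₁).image fun i => (i, k₁)) ((A k₂).image fun i => (i, k₂)) := by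
    intro k₁ _ k₂ _ hne
    simp only [Finset.disjoint_left, Finset.mem_image]
    rintro p ⟨i, _, rfl⟩ ⟨j, _, h⟩
    exact hne ((Prod.mk.injEq _ _ _ _).mp h.symm).2
  calc d₁ * d₂ ≤ d₁ * T.card := Nat.mul_le_mul_left d₁ hTcard
    _ = ∑ k ∈ T, d₁ := by rw [Finset.sum_const, smul_eq_mul, mul_comm]
    _ ≤ ∑ k ∈ T, ((A k).image fun i => (i, k)).card := by
        apply Finset.sum_le_sum
        intro k hk
        rw [Finset.card_image_of_injective _ (fun a b h => (Prod.mk.injEq _ _ _ _).mp h |>.1)]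
        exact hAcard k hk
    _ = (T.biUnion fun k => (A k).image fun i => (i, k)).card :=
        (Finset.card_biUnion hdisj).symm
    _ ≤ hammingWt c := Finset.card_le_card hsub
end

section
/- Let H_X be a matrix over ZMod 2 with rows indexed by ρ and columns by ι, let S be its row space, and for η : ι → ZMod 2 let ψ_η : (ι → ZMod 2) → ℂ be the coset indicator ψ_η(v) = 1 if v − η ∈ S and 0 otherwise. If a : ι → ZMod 2 satisfies H_X · a = 0 (a is a cycle), then applying the Pauli string Z(a) to ψ_η gives (−1)^{⟨a,η⟩} • ψ_η, where the scalar is (−1 : ℂ) raised to the natural-number representative of ⟨a,η⟩ = ∑ᵢ a(i)·η(i) ∈ ZMod 2. Thus the logical-Z operator supported on a cycle a acts on the codeword state ψ_η with eigenvalue determined by the pairing of a with η. -/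
open Matrix

variable {ι : Type*} [Fintype ι] [DecidableEq ι]

open Classical in
/-- The codeword state `ψ_η`: the indicator function of the coset `η + S`
(the unnormalized uniform superposition over `η + S`). -/
noncomputable def cosetState (S : Submodule (ZMod 2) (ι → ZMod 2))
    (η : ι → ZMod 2) : (ι → ZMod 2) → ℂ :=
  fun v => if v - η ∈ S then 1 else 0

variable {ρ : Type*} [Fintype ρ] [DecidableEq ρ]

/-- A logical-Z operator supported on a cycle `a` (i.e. `H_X · a = 0`) acts on
the codeword state `ψ_η` with eigenvalue `(−1)^⟨a,η⟩`. -/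
theorem pauliZ_cycle_eigenvector (HX : Matrix ρ ι (ZMod 2)) (η a : ι → ZMod 2)
    (ha : HX.mulVec a = 0) :
    (PauliZ a).mulVec
        (cosetState (Submodule.span (ZMod 2) (Set.range fun r => HX r)) η) =
      ((-1 : ℂ) ^ (inner2 a η).val) •
        cosetState (Submodule.span (ZMod 2) (Set.range fun r => HX r)) η := by
  funext v
  have hzero : ∀ s ∈ Submodule.span (ZMod 2) (Set.range fun r => HX r),
      inner2 a s = 0 := by
    intro s hs
    induction hs using Submodule.span_induction with
    | mem x hx =>
      obtain ⟨r, rfl⟩ := hx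
      have := congrFun ha r
      simpa [inner2, Matrix.mulVec, dotProduct, mul_comm] using this
    | zero => simp [inner2]
    | add x y _ _ hx hy =>
      have : inner2 a (x + y) = inner2 a x + inner2 a y := by
        simp [inner2, mul_add, Finset.sum_add_distrib]
      rw [this, hx, hy, add_zero]
    | smul c x _ hx =>
      have : inner2 a (c • x) = c * inner2 a x := by
        simp [inner2, Finset.mul_sum, mul_left_comm]
      rw [this, hx, mul_zero]
  simp only [PauliZ, Matrix.mulVec_diagonal, Pi.smul_apply, cosetState, smul_eq_mul]
  by_cases hv : v - η ∈ Submodule.span (ZMod 2) (Set.range fun r => HX r)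
  · have h1 : inner2 a v = inner2 a η := by
      have h2 := hzero _ hv
      have : inner2 a (v - η) = inner2 a v - inner2 a η := by
        simp [inner2, mul_sub, Finset.sum_sub_distrib]
      rw [this] at h2
      linear_combination h2
    simp [hv, h1]
  · simp [hv]
end
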